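/- Let M be a dominating r-uniform hypergraph and M' a sub-hypergraph of M. Then for every n-vertex r-graph H with hom(M − V(M'), H) > 0, one has hom(M,H) / hom(M − V(M'), H) ≥ t_{K_r^{(r)}}(H)^{d_M(V(M'))} · n^{v(M')}. -/

import Mathlib

/-!
Let `E₀` be the edges of `M` avoiding `B`: then `e(M) - |E₀| = d_M(B)`, and the vertices of `B`
are isolated in `E₀`, so `hom(E₀, H) = hom(M - B, H) · n^{|B|}`. Put `c = t_M(H)^{1/e(M)}`.
Domination applied to a single edge gives `t_{K_r^{(r)}}(H) ≤ c`, and applied to `E₀` gives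
`t_{E₀}(H) ≤ c^{|E₀|}`; multiplying,
`t_{K_r^{(r)}}(H)^{d_M(B)} · t_{E₀}(H) ≤ c^{e(M)} = t_M(H)`.
-/

open Finset

/-- An `r`-uniform hypergraph on vertex type `V`: a set of edges, each an `r`-element
subset of `V`. -/
structure HGraph (r : ℕ) (V : Type) where
  edges : Finset (Finset V)
  uniform : ∀ e ∈ edges, e.card = r

variable {r : ℕ} {α β γ : Type}

/-- The set of homomorphisms from `F` to `H`: maps sending every edge of `F` to an edge of `H`. -/
def homFinset [Fintype α] [DecidableEq α] [Fintype β] [DecidableEq β]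
    (F : HGraph r α) (H : HGraph r β) : Finset (α → β) :=
  Finset.univ.filter fun φ => ∀ e ∈ F.edges, e.image φ ∈ H.edges

/-- The number of homomorphisms from `F` to `H`. -/
def homCount [Fintype α] [DecidableEq α] [Fintype β] [DecidableEq β]
    (F : HGraph r α) (H : HGraph r β) : ℕ :=
  (homFinset F H).card

/-- The homomorphism density `t_F(H) = hom(F,H) / v(H)^{v(F)}`. -/
noncomputable def homDensity [Fintype α] [DecidableEq α] [Fintype β] [DecidableEq β]
    (F : HGraph r α) (H : HGraph r β) : ℝ :=
  (homCount F H : ℝ) / (Fintype.card β : ℝ) ^ (Fintype.card α)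

/-- `K_r^{(r)}`: the `r`-graph consisting of a single edge on `r` vertices. -/
def KEdge (r : ℕ) : HGraph r (Fin r) :=
  ⟨{Finset.univ}, by intro e he; rw [Finset.mem_singleton] at he; subst he; simp⟩

/-- Edge density of an `r`-graph, `t_{K_r^{(r)}}(H)`. -/
noncomputable def edgeDensity [Fintype β] [DecidableEq β] (H : HGraph r β) : ℝ :=
  homDensity (KEdge r) H

/-- An `r`-graph `F` is Sidorenko if `t_F(H) ≥ t_{K_r^{(r)}}(H)^{e(F)}` for all `r`-graphs `H`. -/
def IsSidorenko [Fintype α] [DecidableEq α] (F : HGraph r α) : Prop :=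
  ∀ (β : Type) [Fintype β] [DecidableEq β] (H : HGraph r β),
    homDensity F H ≥ edgeDensity H ^ F.edges.card

/-- The Sidorenko exponent
`s(F) = sup {s ≥ 0 : ∃ r-graph H with t_F(H) = t_{K_r^{(r)}}(H)^s > 0}`. -/
noncomputable def sidorenkoExp [Fintype α] [DecidableEq α] (F : HGraph r α) : ℝ :=
  sSup {s : ℝ | 0 ≤ s ∧ ∃ (n : ℕ) (H : HGraph r (Fin n)),
    homDensity F H = edgeDensity H ^ s ∧ 0 < edgeDensity H ^ s}

/-- `d_M(U)`: the number of edges of `M` containing at least one vertex of `U`. -/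
def degNear [DecidableEq α] (M : HGraph r α) (U : Finset α) : ℕ :=
  (M.edges.filter fun e => ∃ v ∈ U, v ∈ e).card

/-- The set of vertices appearing in some edge of a given edge set. -/
def edgeSupport [DecidableEq α] (Es : Finset (Finset α)) : Finset α :=
  Es.biUnion id
/-- `M` is a dominating hypergraph: for every sub-hypergraph `M'` of `M` with at least
one edge (given by a nonempty subset `E'` of the edges of `M`) and every `r`-graph `H`,
`t_M(H)^{1/e(M)} ≥ t_{M'}(H)^{1/e(M')}`. -/
def IsDominating [Fintype α] [DecidableEq α] (M : HGraph r α) : Prop :=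
  ∀ (E' : Finset (Finset α)) (hsub : E' ⊆ M.edges), E'.Nonempty →
    ∀ (β : Type) [Fintype β] [DecidableEq β] (H : HGraph r β),
      homDensity M H ^ ((M.edges.card : ℝ)⁻¹) ≥
        homDensity (⟨E', fun e he => M.uniform e (hsub he)⟩ : HGraph r α) H ^
          ((E'.card : ℝ)⁻¹)

/-- `M − B`: delete the vertices of `B` from `M` (keeping the edges avoiding `B`). -/
def HGraph.delete [DecidableEq α] (M : HGraph r α) (B : Finset α) :
    HGraph r {x : α // x ∉ B} where
  edges := (M.edges.filter fun e => ∀ v ∈ e, v ∉ B).image (Finset.subtype fun x => x ∉ B)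
  uniform := by
    intro e he
    simp only [Finset.mem_image, Finset.mem_filter] at he
    obtain ⟨f, ⟨hf, hfB⟩, rfl⟩ := he
    rw [Finset.card_subtype, Finset.filter_true_of_mem hfB]
    exact M.uniform f hf

namespace HGraph

def restrict (M : HGraph r α) {E : Finset (Finset α)} (hE : E ⊆ M.edges) : HGraph r α :=
  ⟨E, fun e he => M.uniform e (hE he)⟩

-- Defined with only `DecidableEq α` in scope, so that its decidability instance is the one
-- used in `HGraph.delete`.
def edgesAvoiding [DecidableEq α] (M : HGraph r α) (B : Finset α) : Finset (Finset α) :=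
  M.edges.filter fun e => ∀ v ∈ e, v ∉ B

lemma edgesAvoiding_subset [DecidableEq α] (M : HGraph r α) (B : Finset α) :
    M.edgesAvoiding B ⊆ M.edges :=
  Finset.filter_subset _ _

lemma edgesAvoiding_eq_image_delete [DecidableEq α] (M : HGraph r α) (B : Finset α) :
    M.edgesAvoiding B
      = (M.delete B).edges.image fun e : Finset {x // x ∉ B} => e.map (.subtype _) := by
  change _ = ((M.edgesAvoiding B).image (Finset.subtype (· ∉ B))).image _
  rw [Finset.image_image, Finset.image_congr (g := id), Finset.image_id]
  intro e he
  rw [Function.comp_apply, Finset.subtype_map, id]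
  exact Finset.filter_true_of_mem (Finset.mem_filter.mp he).2

end HGraph

lemma degNear_add_card_edgesAvoiding [DecidableEq α] (M : HGraph r α) (B : Finset α) :
    degNear M B + (M.edgesAvoiding B).card = M.edges.card := by
  rw [degNear, HGraph.edgesAvoiding, ← Finset.card_filter_add_card_filter_not
    (s := M.edges) (fun e => ∃ v ∈ B, v ∈ e)]
  refine congrArg (_ + ·) (congrArg Finset.card (Finset.filter_congr fun e _ => ?_))
  simp only [not_exists, not_and]
  exact forall_congr' fun v => ⟨fun h hv hB => h hB hv, fun h hB hv => h hv hB⟩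

section Homomorphisms

variable [Fintype α] [DecidableEq α] [Fintype β] [DecidableEq β] [Fintype γ] [DecidableEq γ]

lemma mem_homFinset {F : HGraph r α} {H : HGraph r β} {φ : α → β} :
    φ ∈ homFinset F H ↔ ∀ e ∈ F.edges, e.image φ ∈ H.edges := by
  simp [homFinset]

lemma homCount_of_edges_eq_empty {F : HGraph r α} (hF : F.edges = ∅) (H : HGraph r β) :
    homCount F H = Fintype.card β ^ Fintype.card α := by
  rw [homCount, homFinset, Finset.filter_true_of_mem (by simp [hF]), Finset.card_univ,
    Fintype.card_fun]

-- The vertices of `α` outside the range of `ι` are isolated in `F`, so they can be mapped freely.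
lemma homCount_eq_mul_of_edges_eq_image {F : HGraph r α} {G : HGraph r γ} (ι : γ ↪ α)
    (hFG : F.edges = G.edges.image (·.map ι)) (H : HGraph r β) :
    homCount F H = homCount G H * Fintype.card β ^ (Fintype.card α - Fintype.card γ) := by
  classical
  let split := (Equiv.piEquivPiSubtypeProd (· ∈ Set.range ι) fun _ => β).trans
    (Equiv.prodCongr ((Equiv.ofInjective ι ι.injective).symm.arrowCongr (Equiv.refl β))
      (Equiv.refl _))
  have hsplit : homCount F H =
      (homFinset G H ×ˢ (Finset.univ : Finset ({x // x ∉ Set.range ι} → β))).card := by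
    have hsplit_fst (φ : α → β) : (split φ).1 = φ ∘ ι := rfl
    refine Finset.card_equiv split fun φ => ?_
    simp [mem_homFinset, hFG, Finset.map_eq_image, Finset.image_image, hsplit_fst]
  rw [hsplit, Finset.card_product, Finset.card_univ, Fintype.card_fun,
    Fintype.card_subtype_compl, Set.card_range_of_injective ι.injective]
  rfl

lemma homDensity_nonneg (F : HGraph r α) (H : HGraph r β) : 0 ≤ homDensity F H := by
  unfold homDensity
  positivity

lemma edgeDensity_nonneg (H : HGraph r β) : 0 ≤ edgeDensity H :=
  homDensity_nonneg _ _

lemma homDensity_of_edges_eq_empty {F : HGraph r α} (hF : F.edges = ∅) (H : HGraph r β)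
    (hn : Fintype.card β ^ Fintype.card α ≠ 0) : homDensity F H = 1 := by
  rw [homDensity, homCount_of_edges_eq_empty hF, Nat.cast_pow]
  exact div_self (by exact_mod_cast hn : (Fintype.card β : ℝ) ^ Fintype.card α ≠ 0)

lemma homDensity_eq_of_edges_eq_image {F : HGraph r α} {G : HGraph r γ} (ι : γ ↪ α)
    (hFG : F.edges = G.edges.image (·.map ι)) (H : HGraph r β)
    (hn : Fintype.card β ^ Fintype.card α ≠ 0) : homDensity F H = homDensity G H := by
  have hsplit : Fintype.card β ^ Fintype.card α = Fintype.card β ^ Fintype.card γ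
      * Fintype.card β ^ (Fintype.card α - Fintype.card γ) := by
    rw [← pow_add, Nat.add_sub_cancel' (Fintype.card_le_of_embedding ι)]
  rw [hsplit] at hn
  rw [homDensity, homDensity, homCount_eq_mul_of_edges_eq_image ι hFG, ← Nat.cast_pow, hsplit]
  push_cast
  exact mul_div_mul_right _ _ (c := (Fintype.card β : ℝ) ^ (Fintype.card α - Fintype.card γ))
    (by exact_mod_cast right_ne_zero_of_mul hn)

lemma homDensity_singleton_eq_edgeDensity {e₀ : Finset α} (he₀ : e₀.card = r)
    (h : ∀ e ∈ ({e₀} : Finset (Finset α)), e.card = r) (H : HGraph r β)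
    (hn : Fintype.card β ^ Fintype.card α ≠ 0) :
    homDensity (⟨{e₀}, h⟩ : HGraph r α) H = edgeDensity H := by
  let ι : Fin r ↪ α := (e₀.equivFinOfCardEq he₀).symm.toEmbedding.trans (.subtype _)
  have hι : Finset.univ.map ι = e₀ := by
    ext x
    simp only [Finset.mem_map, Finset.mem_univ, true_and]
    exact ⟨fun ⟨a, ha⟩ => ha ▸ Subtype.prop _,
      fun hx => ⟨e₀.equivFinOfCardEq he₀ ⟨x, hx⟩, by simp [ι]⟩⟩
  exact homDensity_eq_of_edges_eq_image ι (by simp [KEdge, hι]) H hn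

lemma homCount_restrict_edgesAvoiding (M : HGraph r α) (B : Finset α) (H : HGraph r β) :
    homCount (M.restrict (M.edgesAvoiding_subset B)) H
      = homCount (M.delete B) H * Fintype.card β ^ B.card := by
  rw [homCount_eq_mul_of_edges_eq_image _ (M.edgesAvoiding_eq_image_delete B),
    Fintype.card_subtype_compl, Fintype.card_coe, Nat.sub_sub_self (Finset.card_le_univ B)]

end Homomorphisms

section Dominating

variable [Fintype α] [DecidableEq α] [Fintype β] [DecidableEq β] {M : HGraph r α}

lemma IsDominating.homDensity_restrict_le (hM : IsDominating M) {E : Finset (Finset α)}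
    (hE : E ⊆ M.edges) (H : HGraph r β) (hn : Fintype.card β ^ Fintype.card α ≠ 0) :
    homDensity (M.restrict hE) H ≤ (homDensity M H ^ (M.edges.card : ℝ)⁻¹) ^ E.card := by
  rcases E.eq_empty_or_nonempty with rfl | hne
  · rw [homDensity_of_edges_eq_empty rfl H hn, Finset.card_empty, pow_zero]
  · calc homDensity (M.restrict hE) H
        = (homDensity (M.restrict hE) H ^ (E.card : ℝ)⁻¹) ^ E.card :=
          (Real.rpow_inv_natCast_pow (homDensity_nonneg _ _) hne.card_pos.ne').symm
      _ ≤ _ :=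
          pow_le_pow_left₀ (Real.rpow_nonneg (homDensity_nonneg _ _) _) (hM E hE hne β H) _

lemma IsDominating.edgeDensity_le (hM : IsDominating M) (hne : M.edges.Nonempty)
    (H : HGraph r β) (hn : Fintype.card β ^ Fintype.card α ≠ 0) :
    edgeDensity H ≤ homDensity M H ^ (M.edges.card : ℝ)⁻¹ := by
  obtain ⟨e₀, he₀⟩ := hne
  have hdom := hM {e₀} (Finset.singleton_subset_iff.2 he₀) (Finset.singleton_nonempty e₀) β H
  rwa [Finset.card_singleton, Nat.cast_one, inv_one, Real.rpow_one,
    homDensity_singleton_eq_edgeDensity (M.uniform e₀ he₀) _ H hn] at hdom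

lemma IsDominating.edgeDensity_pow_mul_homDensity_restrict_le (hM : IsDominating M)
    {E : Finset (Finset α)} (hE : E ⊆ M.edges) (H : HGraph r β)
    (hn : Fintype.card β ^ Fintype.card α ≠ 0) :
    edgeDensity H ^ (M.edges.card - E.card) * homDensity (M.restrict hE) H ≤ homDensity M H := by
  rcases M.edges.eq_empty_or_nonempty with hM₀ | hne
  · have hE₀ : E = ∅ := Finset.subset_empty.1 (hM₀ ▸ hE)
    rw [homDensity_of_edges_eq_empty hE₀ H hn, homDensity_of_edges_eq_empty hM₀ H hn,
      hM₀, hE₀, Finset.card_empty, pow_zero, one_mul]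
  · set c := homDensity M H ^ (M.edges.card : ℝ)⁻¹
    have hc : 0 ≤ c := Real.rpow_nonneg (homDensity_nonneg _ _) _
    calc edgeDensity H ^ (M.edges.card - E.card) * homDensity (M.restrict hE) H
        ≤ c ^ (M.edges.card - E.card) * c ^ E.card :=
          mul_le_mul (pow_le_pow_left₀ (edgeDensity_nonneg H) (hM.edgeDensity_le hne H hn) _)
            (hM.homDensity_restrict_le hE H hn) (homDensity_nonneg _ _) (pow_nonneg hc _)
      _ = c ^ M.edges.card := by rw [← pow_add, Nat.sub_add_cancel (Finset.card_le_card hE)]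
      _ = homDensity M H := Real.rpow_inv_natCast_pow (homDensity_nonneg _ _) hne.card_pos.ne'

end Dominating

theorem stmt3_general {r : ℕ} {α : Type} [Fintype α] [DecidableEq α]
    (M : HGraph r α) (hM : IsDominating M)
    (B : Finset α)
    {β : Type} [Fintype β] [DecidableEq β] (H : HGraph r β)
    (hpos : 0 < homCount (M.delete B) H) :
    (homCount M H : ℝ) / (homCount (M.delete B) H : ℝ) ≥
      edgeDensity H ^ degNear M B * (Fintype.card β : ℝ) ^ B.card := by
  rw [ge_iff_le, le_div_iff₀ (by exact_mod_cast hpos)]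
  by_cases hn : Fintype.card β ^ Fintype.card α = 0
  · -- `H` has no vertices, so `hpos` forces every vertex of `M` into `B`
    obtain ⟨hβ, hα⟩ := pow_eq_zero_iff'.mp hn
    obtain ⟨φ, -⟩ := Finset.card_pos.mp hpos
    obtain ⟨x⟩ := Fintype.card_pos_iff.mp (Nat.pos_of_ne_zero hα)
    have hxB : x ∈ B := by_contra fun h => (Fintype.card_eq_zero_iff.mp hβ).elim (φ ⟨x, h⟩)
    rw [hβ, Nat.cast_zero, zero_pow (Finset.card_ne_zero_of_mem hxB), mul_zero, zero_mul]
    positivity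
  · have key := hM.edgeDensity_pow_mul_homDensity_restrict_le (M.edgesAvoiding_subset B) H hn
    rw [homDensity, homDensity, homCount_restrict_edgesAvoiding, mul_div_assoc',
      div_le_div_iff_of_pos_right (by exact_mod_cast Nat.pos_of_ne_zero hn),
      ← degNear_add_card_edgesAvoiding M B, Nat.add_sub_cancel] at key
    push_cast at key
    linarith

/-- Lemma: if `M` is dominating and `M'` is a sub-hypergraph of `M` with vertex set `B`
and edge set `E'`, then for every `n`-vertex `r`-graph `H`,
`hom(M,H)/hom(M − V(M'),H) ≥ t_{K_r^{(r)}}(H)^{d_M(V(M'))} · n^{v(M')}`. -/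
theorem stmt3 {r : ℕ} (hr : 1 ≤ r) {α : Type} [Fintype α] [DecidableEq α]
    (M : HGraph r α) (hM : IsDominating M)
    (B : Finset α) (E' : Finset (Finset α)) (hE' : E' ⊆ M.edges) (hB : ∀ e ∈ E', e ⊆ B)
    {β : Type} [Fintype β] [DecidableEq β] (H : HGraph r β)
    (hpos : 0 < homCount (M.delete B) H) :
    (homCount M H : ℝ) / (homCount (M.delete B) H : ℝ) ≥
      edgeDensity H ^ degNear M B * (Fintype.card β : ℝ) ^ B.card :=
  stmt3_general M hM B H hpos
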